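/- arXiv:2005.02385 — 6 statements merged into one kernel-verified Lean document; each statement's English description precedes it below -/
import Mathlib

section
/- Let p ≡ 5 (mod 8) be a prime number. Then the negative Pell equation x² - 2p·y² = -1 has a solution in integers; equivalently, there do not exist integers x, y with y ≠ 0 such that x² - 2p·y² = 1 and such that the equation u² - 2p·v² = -1 has no integer solution. More precisely: if x² - 2p·y² = 1 has a solution with y ≠ 0, then x² - 2p·y² = -1 also has an integer solution. -/
private lemma two_not_sq' (p : ℕ) (hp : p.Prime) (hmod : p % 8 = 5) :
    ¬ IsSquare (2 : ZMod p) := by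
  haveI : Fact p.Prime := ⟨hp⟩
  rw [ZMod.exists_sq_eq_two_iff (p := p) (by omega)]
  omega

private lemma neg_one_sq' (p : ℕ) (hp : p.Prime) (hmod : p % 8 = 5) :
    IsSquare (-1 : ZMod p) := by
  haveI : Fact p.Prime := ⟨hp⟩
  rw [ZMod.exists_sq_eq_neg_one_iff]
  omega

private lemma pos_sq' {e s : ℤ} (he : 1 ≤ e) (h : e = s ^ 2 ∨ e = -s ^ 2) :
    e = s ^ 2 ∧ s ≠ 0 := by
  rcases h with h | h
  · refine ⟨h, ?_⟩
    rintro rfl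
    simp at h
    omega
  · nlinarith [sq_nonneg s]

private lemma pos_factor' {P c a : ℤ} (hP : 0 < P) (h : a = P * c) (ha : 1 ≤ a) : 1 ≤ c := by
  by_contra hcon
  push_neg at hcon
  have hc0 : c ≤ 0 := by omega
  nlinarith [mul_nonpos_of_nonneg_of_nonpos hP.le hc0]

private lemma descent' (p : ℕ) (hp : p.Prime) (hmod : p % 8 = 5) :
    ∀ n : ℕ, ∀ y : ℤ, y ≠ 0 → (n : ℤ) ^ 2 - 2 * (p : ℤ) * y ^ 2 = 1 →
      ∃ u v : ℤ, u ^ 2 - 2 * (p : ℤ) * v ^ 2 = -1 := by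
  haveI : Fact p.Prime := ⟨hp⟩
  intro n
  induction n using Nat.strong_induction_on with
  | _ n ih =>
  intro y hy hxy
  have hp5 : (5 : ℤ) ≤ (p : ℤ) := by exact_mod_cast (by omega : 5 ≤ p)
  have hy1 : 1 ≤ y ^ 2 := by
    have h1 : 1 ≤ |y| := Int.one_le_abs (by simpa using hy)
    nlinarith [sq_abs y]
  have hN : (3 : ℤ) ≤ (n : ℤ) := by nlinarith [Int.ofNat_nonneg n]
  have hpodd : ¬ (2 : ℤ) ∣ (p : ℤ) := by
    intro ⟨c, hc⟩
    have h1 : (p : ℤ) % 2 = 1 := by exact_mod_cast (by omega : p % 2 = 1)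
    omega
  -- n is odd
  have hodd : Odd ((n : ℤ)) := by
    rcases Int.even_or_odd (n : ℤ) with ⟨k, hk⟩ | h
    · exfalso
      have h2 : 4 * (k * k) = 1 + 2 * ((p : ℤ) * y ^ 2) := by nlinarith [hxy, hk]
      generalize k * k = A at h2
      generalize (p : ℤ) * y ^ 2 = B at h2
      omega
    · exact h
  obtain ⟨a, ha⟩ := hodd
  have ha1 : 1 ≤ a := by omega
  have key : 2 * (a * (a + 1)) = (p : ℤ) * y ^ 2 := by nlinarith [hxy, ha]
  -- y is even
  have h2y : (2 : ℤ) ∣ y := by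
    have h1 : (2 : ℤ) ∣ (p : ℤ) * y ^ 2 := ⟨a * (a + 1), key.symm⟩
    rcases Int.prime_two.dvd_mul.mp h1 with h | h
    · exact absurd h hpodd
    · exact Int.prime_two.dvd_of_dvd_pow h
  obtain ⟨z, hz⟩ := h2y
  have hz0 : z ≠ 0 := by rintro rfl; simp at hz; exact hy hz
  have key2 : a * (a + 1) = 2 * (p : ℤ) * z ^ 2 := by
    apply mul_left_cancel₀ (two_ne_zero (α := ℤ))
    rw [key, hz]; ring
  have hcop : IsCoprime a (a + 1) := ⟨-1, 1, by ring⟩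
  have hpZ : Prime ((p : ℤ)) := Nat.prime_iff_prime_int.mp hp
  have hpdvd : (p : ℤ) ∣ a ∨ (p : ℤ) ∣ (a + 1) := by
    apply hpZ.dvd_mul.mp
    exact ⟨2 * z ^ 2, by linarith [key2]⟩
  have h2dvd : (2 : ℤ) ∣ a ∨ (2 : ℤ) ∣ (a + 1) := by
    rcases Int.even_or_odd a with ⟨m, hm⟩ | ⟨m, hm⟩
    · exact Or.inl ⟨m, by omega⟩
    · exact Or.inr ⟨m + 1, by omega⟩
  have hp0 : (0 : ℤ) < (p : ℤ) := by linarith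
  have h2p : (2 * (p : ℤ)) ≠ 0 := by positivity
  -- contradiction lemmas mod p
  have mod1 : ∀ s t : ℤ, 2 * t ^ 2 - (p : ℤ) * s ^ 2 = 1 → False := by
    intro s t h
    apply two_not_sq' p hp hmod
    have hc : ((2 * t ^ 2 - (p : ℤ) * s ^ 2 : ℤ) : ZMod p) = 1 := by rw [h]; simp
    push_cast at hc
    rw [ZMod.natCast_self] at hc
    set T : ZMod p := (t : ZMod p) with hT
    have h2 : 2 * T ^ 2 = 1 := by rw [hT]; linear_combination hc
    exact ⟨2 * T, by linear_combination -2 * h2⟩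
  have mod2 : ∀ s t : ℤ, (p : ℤ) * t ^ 2 - 2 * s ^ 2 = 1 → False := by
    intro s t h
    apply two_not_sq' p hp hmod
    obtain ⟨j, hj⟩ := neg_one_sq' p hp hmod
    have hc : (((p : ℤ) * t ^ 2 - 2 * s ^ 2 : ℤ) : ZMod p) = 1 := by rw [h]; simp
    push_cast at hc
    rw [ZMod.natCast_self] at hc
    set S : ZMod p := (s : ZMod p) with hS
    have h2 : 2 * S ^ 2 = -1 := by rw [hS]; linear_combination -hc
    exact ⟨j * (2 * S), by linear_combination (4 * S ^ 2) * hj + 2 * h2⟩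
  rcases hpdvd with ⟨c, hc⟩ | ⟨c, hc⟩
  · rcases h2dvd with ⟨d, hd⟩ | ⟨d, hd⟩
    · -- p ∣ a, 2 ∣ a : a = 2 p e, descent
      have h2c : (2 : ℤ) ∣ c := by
        have h1 : (2 : ℤ) ∣ (p : ℤ) * c := ⟨d, by omega⟩
        rcases Int.prime_two.dvd_mul.mp h1 with h | h
        · exact absurd h hpodd
        · exact h
      obtain ⟨e, he⟩ := h2c
      have ha2 : a = 2 * (p : ℤ) * e := by rw [hc, he]; ring
      have hcancel : e * (a + 1) = z ^ 2 := by
        apply mul_left_cancel₀ h2p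
        linear_combination key2 - (a + 1) * ha2
      have hcop2 : IsCoprime e (a + 1) :=
        hcop.of_isCoprime_of_dvd_left ⟨2 * (p : ℤ), by rw [ha2]; ring⟩
      obtain ⟨s, hs⟩ := Int.sq_of_isCoprime hcop2 hcancel
      obtain ⟨t, ht⟩ := Int.sq_of_isCoprime hcop2.symm (by rw [mul_comm]; exact hcancel)
      have he1 : 1 ≤ e := pos_factor' (by positivity) ha2 ha1
      obtain ⟨hes, hs0⟩ := pos_sq' he1 hs
      obtain ⟨het, ht0⟩ := pos_sq' (by omega : (1:ℤ) ≤ a + 1) ht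
      have ht2 : ((t.natAbs : ℤ)) ^ 2 = t ^ 2 := Int.natAbs_sq t
      have hnew : ((t.natAbs : ℤ)) ^ 2 - 2 * (p : ℤ) * s ^ 2 = 1 := by
        rw [ht2]
        linear_combination ha2 - het + 2 * (p : ℤ) * hes
      have hlt : t.natAbs < n := by
        have h1 : ((t.natAbs : ℤ)) ^ 2 < (n : ℤ) ^ 2 := by
          rw [ht2, ← het]; nlinarith [ha, ha1, hN]
        by_contra hcon
        push_neg at hcon
        have h3 : (n : ℤ) ≤ (t.natAbs : ℤ) := by exact_mod_cast hcon
        nlinarith [Int.ofNat_nonneg n]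
      exact ih t.natAbs hlt s hs0 hnew
    · -- p ∣ a, 2 ∣ a + 1 : contradiction mod p
      have hcancel : c * d = z ^ 2 := by
        apply mul_left_cancel₀ h2p
        linear_combination key2 - (a + 1) * hc - (p : ℤ) * c * hd
      have hcop2 : IsCoprime c d := by
        have h1 : IsCoprime c (a + 1) := hcop.of_isCoprime_of_dvd_left ⟨(p:ℤ), by rw [hc]; ring⟩
        exact h1.of_isCoprime_of_dvd_right ⟨2, by rw [hd]; ring⟩
      obtain ⟨s, hs⟩ := Int.sq_of_isCoprime hcop2 hcancel
      obtain ⟨t, ht⟩ := Int.sq_of_isCoprime hcop2.symm (by rw [mul_comm]; exact hcancel)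
      have hc1 : 1 ≤ c := pos_factor' hp0 hc ha1
      have hd1 : 1 ≤ d := pos_factor' (by norm_num) hd (by omega)
      obtain ⟨hcs, _⟩ := pos_sq' hc1 hs
      obtain ⟨hdt, _⟩ := pos_sq' hd1 ht
      exact absurd (by linear_combination -hd + hc - 2 * hdt + (p : ℤ) * hcs :
        2 * t ^ 2 - (p : ℤ) * s ^ 2 = 1) (fun h => mod1 s t h)
  · rcases h2dvd with ⟨d, hd⟩ | ⟨d, hd⟩
    · -- 2 ∣ a, p ∣ a + 1 : contradiction mod p
      have hcancel : d * c = z ^ 2 := by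
        apply mul_left_cancel₀ h2p
        linear_combination key2 - (a + 1) * hd - 2 * d * hc
      have hcop2 : IsCoprime d c := by
        have h1 : IsCoprime d (a + 1) := hcop.of_isCoprime_of_dvd_left ⟨2, by rw [hd]; ring⟩
        exact h1.of_isCoprime_of_dvd_right ⟨(p:ℤ), by rw [hc]; ring⟩
      obtain ⟨s, hs⟩ := Int.sq_of_isCoprime hcop2 hcancel
      obtain ⟨t, ht⟩ := Int.sq_of_isCoprime hcop2.symm (by rw [mul_comm]; exact hcancel)
      have hd1 : 1 ≤ d := pos_factor' (by norm_num) hd ha1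
      have hc1 : 1 ≤ c := pos_factor' hp0 hc (by omega)
      obtain ⟨hds, _⟩ := pos_sq' hd1 hs
      obtain ⟨hct, _⟩ := pos_sq' hc1 ht
      exact absurd (by linear_combination -(p : ℤ) * hct + 2 * hds + hd - hc :
        (p : ℤ) * t ^ 2 - 2 * s ^ 2 = 1) (fun h => mod2 s t h)
    · -- p ∣ a + 1, 2 ∣ a + 1 : solution!
      have h2c : (2 : ℤ) ∣ c := by
        have h1 : (2 : ℤ) ∣ (p : ℤ) * c := ⟨d, by omega⟩
        rcases Int.prime_two.dvd_mul.mp h1 with h | h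
        · exact absurd h hpodd
        · exact h
      obtain ⟨e, he⟩ := h2c
      have ha2 : a + 1 = 2 * (p : ℤ) * e := by rw [hc, he]; ring
      have hcancel : a * e = z ^ 2 := by
        apply mul_left_cancel₀ h2p
        linear_combination key2 - a * ha2
      have hcop2 : IsCoprime a e :=
        hcop.of_isCoprime_of_dvd_right ⟨2 * (p : ℤ), by rw [ha2]; ring⟩
      obtain ⟨s, hs⟩ := Int.sq_of_isCoprime hcop2 hcancel
      obtain ⟨t, ht⟩ := Int.sq_of_isCoprime hcop2.symm (by rw [mul_comm]; exact hcancel)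
      have he1 : 1 ≤ e := pos_factor' (by positivity) ha2 (by omega)
      obtain ⟨has, _⟩ := pos_sq' ha1 hs
      obtain ⟨het, _⟩ := pos_sq' he1 ht
      exact ⟨s, t, by linear_combination -has + 2 * (p : ℤ) * het + ha2⟩

theorem negative_pell_two_p (p : ℕ) (hp : p.Prime) (hmod : p % 8 = 5)
    (h : ∃ x y : ℤ, y ≠ 0 ∧ x ^ 2 - 2 * (p : ℤ) * y ^ 2 = 1) :
    ∃ x y : ℤ, x ^ 2 - 2 * (p : ℤ) * y ^ 2 = -1 := by
  obtain ⟨x, y, hy, hxy⟩ := h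
  apply descent' p hp hmod x.natAbs y hy
  rw [Int.natAbs_sq]
  exact hxy
end

section
/- The only rational points on the elliptic curve E₁: y² = x³ + 3x² - 8x - 24 are (-3, 0) and the point at infinity. -/
/-!
With `X = x + 3` the curve is `y² = X (X² - 6X + 1)`. For `X = u / w` in lowest terms,
`u w (u² - 6uw + w²)` is an integer square with pairwise coprime factors, so `u = a²`,
`w = b²` and `a⁴ - 6a²b² + b⁴ = c²`. Read as `c² + (2ab)² = (a² - b²)²`, this is a
primitive Pythagorean triple, whose parametrisation gives `ab = mn` and
`a² - b² = m² + n²`. Factoring both sides of `ab = mn` turns the second equation into a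
solution of `q⁴ + t² = r⁴` with `qt ≠ 0`, which Fermat's infinite descent on `|r|` rules
out. Hence `X = 0`.
-/

namespace Int

theorem exists_sq_of_isCoprime_of_nonneg {a b c : ℤ} (h : IsCoprime a b) (heq : a * b = c ^ 2)
    (ha : 0 ≤ a) : ∃ r, a = r ^ 2 := by
  obtain ⟨r, hr | hr⟩ := Int.sq_of_isCoprime h heq
  · exact ⟨r, hr⟩
  · exact ⟨0, by nlinarith [sq_nonneg r]⟩

theorem exists_abs_eq_sq_of_isCoprime {a b c : ℤ} (h : IsCoprime a b) (heq : |a * b| = c ^ 2) :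
    ∃ r, |a| = r ^ 2 :=
  exists_sq_of_isCoprime_of_nonneg h.abs_left.abs_right (by rwa [← abs_mul]) (abs_nonneg a)

theorem odd_of_isCoprime_of_even {a b : ℤ} (h : IsCoprime a b) (ha : Even a) : Odd b := by
  obtain ⟨k, rfl⟩ := ha
  rw [← two_mul] at h
  exact Int.isCoprime_two_left.mp h.of_mul_left_left

end Int

def Fermat424 (a b c : ℤ) : Prop :=
  a ≠ 0 ∧ b ≠ 0 ∧ a ^ 4 + b ^ 2 = c ^ 4

namespace Fermat424

theorem exists_isCoprime {a b c : ℤ} (habc : Fermat424 a b c) :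
    ∃ a' b' c', Fermat424 a' b' c' ∧ IsCoprime a' c' ∧ c'.natAbs ≤ c.natAbs := by
  obtain ⟨ha, hb, h⟩ := habc
  obtain ⟨g, a', c', hg, hco, rfl, rfl⟩ :=
    Int.exists_gcd_one' (Int.gcd_pos_of_ne_zero_left c ha)
  obtain ⟨b', rfl⟩ : (g : ℤ) ^ 2 ∣ b := by
    rw [← Int.pow_dvd_pow_iff two_ne_zero, ← pow_mul]
    exact ⟨c' ^ 4 - a' ^ 4, by linear_combination h⟩
  have hg4 : (g : ℤ) ^ 4 ≠ 0 := by positivity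
  refine ⟨a', b', c', ⟨left_ne_zero_of_mul ha, right_ne_zero_of_mul hb,
    mul_left_cancel₀ hg4 (by linear_combination h)⟩, Int.isCoprime_iff_gcd_eq_one.mpr hco, ?_⟩
  rw [Int.natAbs_mul, Int.natAbs_natCast]
  exact Nat.le_mul_of_pos_right _ hg

-- `(c² - a²) / 2 = s²` and `(c² + a²) / 2 = t²` are coprime with product `(b / 2)²`,
-- and then `s⁴ + (ac)² = t⁴`.
theorem exists_smaller_of_odd_of_odd {a b c : ℤ} (hac : IsCoprime a c) (ha : Odd a) (hc : Odd c)
    (hb : b ≠ 0) (h : a ^ 4 + b ^ 2 = c ^ 4) :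
    ∃ a' b' c', Fermat424 a' b' c' ∧ c'.natAbs < c.natAbs := by
  obtain ⟨u, hu⟩ : Even (c ^ 2 - a ^ 2) := hc.pow.sub_odd ha.pow
  obtain ⟨v, hv⟩ : Even (c ^ 2 + a ^ 2) := hc.pow.add_odd ha.pow
  obtain ⟨b', rfl⟩ : Even b := by
    rw [← Int.even_pow' two_ne_zero]
    exact ⟨2 * u * v, by linear_combination (2 * v) * hu + (c ^ 2 - a ^ 2) * hv + h⟩
  have huv : u * v = b' ^ 2 := by
    have : 4 * (u * v) = 4 * b' ^ 2 := by
      linear_combination (-2 * v) * hu - (c ^ 2 - a ^ 2) * hv - h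
    linarith
  have hva : v - u = a ^ 2 := by linarith
  have hvc : v + u = c ^ 2 := by linarith
  have hcop : IsCoprime u v := by
    obtain ⟨x, y, hxy⟩ := (hac.pow : IsCoprime (a ^ 2) (c ^ 2))
    exact ⟨y - x, x + y, by linear_combination hxy + x * hva + y * hvc⟩
  have ha0 : a ≠ 0 := by rintro rfl; simp at ha
  have hc0 : c ≠ 0 := by rintro rfl; simp at hc
  have hv0 : 0 < v := by nlinarith [sq_pos_of_ne_zero ha0, sq_nonneg c]
  have hu0 : 0 ≤ u := nonneg_of_mul_nonneg_left (huv ▸ sq_nonneg b') hv0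
  obtain ⟨s, rfl⟩ := Int.exists_sq_of_isCoprime_of_nonneg hcop huv hu0
  obtain ⟨t, rfl⟩ :=
    Int.exists_sq_of_isCoprime_of_nonneg hcop.symm (by rw [mul_comm, huv]) hv0.le
  have hs : s ≠ 0 := by
    rintro rfl
    have : (b' + b') ^ 2 = 0 := by linear_combination h + (c ^ 2 + a ^ 2) * (hva - hvc)
    exact hb (pow_eq_zero_iff two_ne_zero |>.mp this)
  refine ⟨s, a * c, t, ⟨hs, mul_ne_zero ha0 hc0,
    by linear_combination (-a ^ 2) * hvc - (t ^ 2 + s ^ 2) * hva⟩, ?_⟩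
  rw [Int.natAbs_lt_iff_sq_lt]
  nlinarith [sq_pos_of_ne_zero hs]

theorem exists_of_mul_mul_sq_sub_sq_eq_sq {p q k : ℤ} (hpq : IsCoprime p q) (hk : k ≠ 0)
    (h : p * q * (p ^ 2 - q ^ 2) = k ^ 2) :
    ∃ a' b' c', Fermat424 a' b' c' ∧ (c'.natAbs : ℤ) < p ^ 2 + q ^ 2 := by
  have hk2 : k ^ 2 ≠ 0 := pow_ne_zero 2 hk
  have hp : p ≠ 0 := by rintro rfl; simp at h; exact hk2 h.symm
  have hq : q ≠ 0 := by rintro rfl; simp at h; exact hk2 h.symm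
  have hp_sub : IsCoprime p (p ^ 2 - q ^ 2) := by
    rw [show p ^ 2 - q ^ 2 = -q ^ 2 + p * p by ring]
    exact (hpq.pow_right (n := 2)).neg_right.add_mul_left_right p
  have hq_sub : IsCoprime q (p ^ 2 - q ^ 2) := by
    rw [show p ^ 2 - q ^ 2 = p ^ 2 + q * -q by ring]
    exact (hpq.symm.pow_right (n := 2)).add_mul_left_right (-q)
  obtain ⟨P, hP⟩ := Int.exists_abs_eq_sq_of_isCoprime (hpq.mul_right hp_sub)
    (by rw [← mul_assoc, h, abs_sq])
  obtain ⟨Q, hQ⟩ := Int.exists_abs_eq_sq_of_isCoprime (hpq.symm.mul_right hq_sub)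
    (by rw [mul_left_comm, ← mul_assoc, h, abs_sq])
  obtain ⟨R, hR⟩ := Int.exists_abs_eq_sq_of_isCoprime (hp_sub.mul_left hq_sub).symm
    (by rw [mul_comm, h, abs_sq])
  have hP4 : p ^ 2 = P ^ 4 := by rw [← sq_abs, hP]; ring
  have hQ4 : q ^ 2 = Q ^ 4 := by rw [← sq_abs, hQ]; ring
  have hP0 : P ≠ 0 := by rintro rfl; simp [hp] at hP
  have hQ0 : Q ≠ 0 := by rintro rfl; simp [hq] at hQ
  have hR0 : R ≠ 0 := by rintro rfl; simp at hR; simp [hR] at h; exact hk2 h.symm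
  have hPp : (P.natAbs : ℤ) < p ^ 2 + q ^ 2 := by
    nlinarith [Int.natAbs_le_self_sq P, Int.natAbs_le_self_sq p, Int.natCast_natAbs p,
      sq_pos_of_ne_zero hq]
  have hQq : (Q.natAbs : ℤ) < p ^ 2 + q ^ 2 := by
    nlinarith [Int.natAbs_le_self_sq Q, Int.natAbs_le_self_sq q, Int.natCast_natAbs q,
      sq_pos_of_ne_zero hp]
  rcases abs_eq (sq_nonneg R) |>.mp hR with hR | hR
  · exact ⟨Q, R, P, ⟨hQ0, hR0, by linear_combination -hR + hP4 - hQ4⟩, hPp⟩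
  · exact ⟨P, R, Q, ⟨hP0, hR0, by linear_combination hR - hP4 + hQ4⟩, hQq⟩

theorem exists_smaller_of_sq_eq_two_mul_mul {a c m n : ℤ} (hmn : IsCoprime m n) (hn : n % 2 = 1)
    (ha : a ≠ 0) (ha2 : a ^ 2 = 2 * m * n) (hc : c ^ 2 = m ^ 2 + n ^ 2) :
    ∃ a' b' c', Fermat424 a' b' c' ∧ c'.natAbs < c.natAbs := by
  have hn0 : n ≠ 0 := by rintro rfl; simp at hn
  have hc0 : 0 < |c| := abs_pos.mpr <| by
    rintro rfl; nlinarith [sq_nonneg m, sq_pos_of_ne_zero hn0]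
  obtain ⟨p, q, rfl, rfl, hcpq, hpq, -, -⟩ := PythagoreanTriple.coprime_classification'
    (x := n) (y := m) (z := |c|)
    (by delta PythagoreanTriple; rw [abs_mul_abs_self]; linear_combination -hc)
    (Int.isCoprime_iff_gcd_eq_one.mp hmn.symm) hn hc0
  obtain ⟨k, rfl⟩ : Even a := by
    rw [← Int.even_pow' two_ne_zero, ha2]; exact (even_two_mul _).mul_right _
  have hk : p * q * (p ^ 2 - q ^ 2) = k ^ 2 := by linarith
  obtain ⟨a', b', c', habc', hlt⟩ := exists_of_mul_mul_sq_sub_sq_eq_sq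
    (Int.isCoprime_iff_gcd_eq_one.mpr hpq) (by rintro rfl; simp at ha) hk
  refine ⟨a', b', c', habc', ?_⟩
  rw [← Int.ofNat_lt, Int.natCast_natAbs c, hcpq]
  exact hlt

theorem exists_smaller_of_even {a b c : ℤ} (hac : IsCoprime a c) (ha0 : a ≠ 0) (ha : Even a)
    (h : a ^ 4 + b ^ 2 = c ^ 4) : ∃ a' b' c', Fermat424 a' b' c' ∧ c'.natAbs < c.natAbs := by
  have hab : IsCoprime (a ^ 2) b := by
    have h4 : IsCoprime (a ^ 4) (b ^ 2) := by
      rw [show b ^ 2 = c ^ 4 + a ^ 4 * (-1) by linear_combination h]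
      exact hac.pow.add_mul_left_right (-1)
    exact (IsCoprime.pow_iff two_pos two_pos).mp (by rw [← pow_mul]; exact h4)
  have hb : Odd b := Int.odd_of_isCoprime_of_even hab (ha.pow_of_ne_zero two_ne_zero)
  have hc : Odd c := Int.odd_of_isCoprime_of_even hac ha
  have hc0 : c ≠ 0 := by rintro rfl; simp at hc
  obtain ⟨m, n, -, ha2, hc2, hmn, hpar, -⟩ := PythagoreanTriple.coprime_classification'
    (x := b) (y := a ^ 2) (z := c ^ 2) (by delta PythagoreanTriple; linear_combination h)
    (Int.isCoprime_iff_gcd_eq_one.mp hab.symm) (Int.odd_iff.mp hb) (by positivity)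
  replace hmn := Int.isCoprime_iff_gcd_eq_one.mpr hmn
  rcases hpar with ⟨-, hn⟩ | ⟨hm, -⟩
  · exact exists_smaller_of_sq_eq_two_mul_mul hmn hn ha0 ha2 hc2
  · exact exists_smaller_of_sq_eq_two_mul_mul hmn.symm hm ha0 (by rw [ha2]; ring)
      (by rw [hc2]; ring)

theorem exists_smaller_of_isCoprime {a b c : ℤ} (habc : Fermat424 a b c) (hac : IsCoprime a c) :
    ∃ a' b' c', Fermat424 a' b' c' ∧ c'.natAbs < c.natAbs := by
  obtain ⟨ha, hb, h⟩ := habc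
  rcases Int.even_or_odd a with ha' | ha'
  · exact exists_smaller_of_even hac ha ha' h
  rcases Int.even_or_odd c with ⟨l, rfl⟩ | hc'
  · obtain ⟨k, rfl⟩ := ha'
    have key : ∀ x y z : ZMod 4, (2 * x + 1) ^ 4 + y ^ 2 ≠ (z + z) ^ 4 := by decide
    exact absurd (by exact_mod_cast congrArg (Int.cast : ℤ → ZMod 4) h) (key k b l)
  · exact exists_smaller_of_odd_of_odd hac ha' hc' hb h

end Fermat424

theorem not_fermat_424 {a b c : ℤ} : ¬Fermat424 a b c := by
  induction hn : c.natAbs using Nat.strong_induction_on generalizing a b c with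
  | _ n ih =>
  intro habc
  obtain ⟨a₁, b₁, c₁, habc₁, hco, hle⟩ := Fermat424.exists_isCoprime habc
  obtain ⟨a₂, b₂, c₂, habc₂, hlt⟩ := Fermat424.exists_smaller_of_isCoprime habc₁ hco
  exact ih _ (by omega) rfl habc₂

namespace Int

theorem mul_eq_zero_of_sq_sub_sq_eq_sq_add_sq {a b m n : ℤ} (hab : IsCoprime a b)
    (h₁ : a * b = m * n) (h₂ : a ^ 2 - b ^ 2 = m ^ 2 + n ^ 2) : a * b = 0 := by
  by_contra hab0
  have hmn : m * n ≠ 0 := h₁ ▸ hab0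
  -- the four-number lemma: `a = p r`, `b = q s`, `m = p q`, `n = r s`
  obtain ⟨p, q, ⟨r, rfl⟩, ⟨s, rfl⟩, rfl⟩ :=
    exists_dvd_and_dvd_of_dvd_mul (Dvd.intro n h₁.symm)
  obtain rfl : n = r * s :=
    mul_left_cancel₀ (left_ne_zero_of_mul hmn) (by linear_combination -h₁)
  simp only [mul_eq_zero, not_or] at hab0
  obtain ⟨⟨hp, -⟩, hq, hs⟩ := hab0
  have hps : IsCoprime p s := hab.of_mul_left_left.of_mul_right_right
  have hkey : s ^ 2 * (r ^ 2 + q ^ 2) = p ^ 2 * (r ^ 2 - q ^ 2) := by linear_combination -h₂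
  obtain ⟨K, hK⟩ : p ^ 2 ∣ r ^ 2 + q ^ 2 := hps.pow.dvd_of_dvd_mul_left ⟨_, hkey⟩
  have hK' : r ^ 2 - q ^ 2 = s ^ 2 * K :=
    mul_left_cancel₀ (pow_ne_zero 2 hp) (by linear_combination -hkey + s ^ 2 * hK)
  have hK0 : K ≠ 0 := by rintro rfl; nlinarith [sq_pos_of_ne_zero hq, sq_nonneg r]
  exact not_fermat_424 (a := q) (c := r) ⟨hq, mul_ne_zero (mul_ne_zero hp hs) hK0,
    by linear_combination -(r ^ 2 - q ^ 2) * hK - p ^ 2 * K * hK'⟩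

theorem mul_eq_zero_of_pow_four_sub_six_mul_add_pow_four_eq_sq {a b c : ℤ}
    (hab : IsCoprime a b) (h : a ^ 4 - 6 * a ^ 2 * b ^ 2 + b ^ 4 = c ^ 2) : a * b = 0 := by
  wlog hlt : b ^ 2 < a ^ 2 generalizing a b
  · rcases (not_lt.mp hlt : a ^ 2 ≤ b ^ 2).lt_or_eq with hlt | heq
    · rw [mul_comm]; exact this hab.symm (by linear_combination h) hlt
    · have hc : c ^ 2 = -4 * a ^ 4 := by linear_combination -h + (5 * a ^ 2 - b ^ 2) * heq
      have ha : a ^ 4 = 0 := by nlinarith [sq_nonneg c, sq_nonneg (a ^ 2)]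
      simp [pow_eq_zero_iff four_ne_zero |>.mp ha]
  have hsub : Odd (a ^ 2 - b ^ 2) := by
    rcases Int.even_or_odd a with ha | ha
    · exact (ha.pow_of_ne_zero two_ne_zero).sub_odd (Int.odd_of_isCoprime_of_even hab ha).pow
    rcases Int.even_or_odd b with hb | hb
    · exact ha.pow.sub_even (hb.pow_of_ne_zero two_ne_zero)
    -- for odd `a`, `b` the left side is `12` modulo `16`
    obtain ⟨k, rfl⟩ := ha
    obtain ⟨l, rfl⟩ := hb
    have key : ∀ x y z : ZMod 16,
        (2 * x + 1) ^ 4 - 6 * (2 * x + 1) ^ 2 * (2 * y + 1) ^ 2 + (2 * y + 1) ^ 4 ≠ z ^ 2 := by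
      decide
    exact absurd (by exact_mod_cast congrArg (Int.cast : ℤ → ZMod 16) h) (key k l c)
  have hc : Odd c := by
    rw [← Int.odd_pow' two_ne_zero,
      show c ^ 2 = (a ^ 2 - b ^ 2) ^ 2 - 2 * (2 * (a * b) ^ 2) by linear_combination -h]
    exact hsub.pow.sub_even (even_two_mul _)
  have hac : IsCoprime a c := by
    rw [← IsCoprime.pow_right_iff two_pos,
      show c ^ 2 = b ^ 4 + a * (a ^ 3 - 6 * a * b ^ 2) by linear_combination -h]
    exact hab.pow_right.add_mul_left_right _
  have hbc : IsCoprime b c := by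
    rw [← IsCoprime.pow_right_iff two_pos,
      show c ^ 2 = a ^ 4 + b * (b ^ 3 - 6 * a ^ 2 * b) by linear_combination -h]
    exact hab.symm.pow_right.add_mul_left_right _
  have hc2ab : IsCoprime c (2 * a * b) :=
    ((Int.isCoprime_two_right.mpr hc).mul_right hac.symm).mul_right hbc.symm
  obtain ⟨m, n, -, habmn, hab2, -⟩ := PythagoreanTriple.coprime_classification'
    (x := c) (y := 2 * a * b) (z := a ^ 2 - b ^ 2)
    (by delta PythagoreanTriple; linear_combination -h)
    (Int.isCoprime_iff_gcd_eq_one.mp hc2ab) (Int.odd_iff.mp hc) (by linarith)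
  exact Int.mul_eq_zero_of_sq_sub_sq_eq_sq_add_sq hab (by linarith) hab2

theorem eq_zero_of_mul_mul_eq_sq {u w d : ℤ} (huw : IsCoprime u w) (hw : 0 < w)
    (h : u * w * (u ^ 2 - 6 * u * w + w ^ 2) = d ^ 2) : u = 0 := by
  have huQ : IsCoprime u (u ^ 2 - 6 * u * w + w ^ 2) := by
    rw [show u ^ 2 - 6 * u * w + w ^ 2 = w ^ 2 + u * (u - 6 * w) by ring]
    exact huw.pow_right.add_mul_left_right _
  have hwQ : IsCoprime w (u ^ 2 - 6 * u * w + w ^ 2) := by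
    rw [show u ^ 2 - 6 * u * w + w ^ 2 = u ^ 2 + w * (w - 6 * u) by ring]
    exact huw.symm.pow_right.add_mul_left_right _
  have hu : 0 ≤ u := by
    by_contra! hu
    have hQ : 0 < u ^ 2 - 6 * u * w + w ^ 2 := by nlinarith
    nlinarith [sq_nonneg d, mul_neg_of_neg_of_pos (mul_neg_of_neg_of_pos hu hw) hQ]
  rcases hu.eq_or_lt with rfl | hu
  · rfl
  have hQ : 0 ≤ u ^ 2 - 6 * u * w + w ^ 2 :=
    nonneg_of_mul_nonneg_right (h ▸ sq_nonneg d) (mul_pos hu hw)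
  obtain ⟨α, rfl⟩ :=
    Int.exists_sq_of_isCoprime_of_nonneg (huw.mul_right huQ) (by rw [← h]; ring) hu.le
  obtain ⟨β, rfl⟩ :=
    Int.exists_sq_of_isCoprime_of_nonneg (huw.symm.mul_right hwQ) (by rw [← h]; ring) hw.le
  obtain ⟨γ, hγ⟩ :=
    Int.exists_sq_of_isCoprime_of_nonneg (huQ.mul_left hwQ).symm (by rw [← h]; ring) hQ
  have hαβ : α * β = 0 := Int.mul_eq_zero_of_pow_four_sub_six_mul_add_pow_four_eq_sq
    ((IsCoprime.pow_iff two_pos two_pos).mp huw) (by rw [← hγ]; ring)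
  rcases mul_eq_zero.mp hαβ with rfl | rfl
  · ring
  · simp at hw

end Int

theorem Rat.exists_num_mul_den_mul_eq_sq {X y : ℚ} (h : y ^ 2 = X ^ 3 - 6 * X ^ 2 + X) :
    ∃ d : ℤ, X.num * X.den * (X.num ^ 2 - 6 * X.num * X.den + X.den ^ 2) = d ^ 2 := by
  have hsq :
      IsSquare ((X.num * X.den * (X.num ^ 2 - 6 * X.num * X.den + X.den ^ 2) : ℤ) : ℚ) := by
    refine ⟨y * X.den ^ 2, ?_⟩
    push_cast
    rw [← Rat.mul_den_eq_num X]
    linear_combination (-(X.den : ℚ) ^ 4) * h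
  obtain ⟨d, hd⟩ := Rat.isSquare_intCast_iff.mp hsq
  exact ⟨d, by rw [hd, sq]⟩

theorem E1_rational_points (x y : ℚ) :
    y ^ 2 = x ^ 3 + 3 * x ^ 2 - 8 * x - 24 → x = -3 ∧ y = 0 := by
  intro h
  have hX : y ^ 2 = (x + 3) ^ 3 - 6 * (x + 3) ^ 2 + (x + 3) := by linear_combination h
  obtain ⟨d, hd⟩ := Rat.exists_num_mul_den_mul_eq_sq hX
  have hx : x + 3 = 0 := Rat.num_eq_zero.mp <| Int.eq_zero_of_mul_mul_eq_sq
    (x + 3).isCoprime_num_den (by exact_mod_cast (x + 3).pos) hd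
  refine ⟨by linarith, pow_eq_zero_iff two_ne_zero |>.mp ?_⟩
  rw [hX, hx]
  ring
end

section
/- The only rational points on the elliptic curve E: y² = x³ + x (i.e., y² = x(x² + 1)) are (0, 0) and the point at infinity. -/
/-!
Write `x = p / q` in lowest terms. A rational point forces `x ≥ 0`, and multiplying the equation
by `q⁴` shows that `q · p · (p² + q²)` is the square of `y q²`. Its three factors are pairwise
coprime, so each is a square: `q = k²`, `p = m²`, `p² + q² = n²`. Then `m⁴ + k⁴ = n²` with
`k ≠ 0`, and Fermat's theorem for this equation (`not_fermat_42`) forces `m = 0`.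
-/

theorem Nat.Coprime.isSquare_of_isSquare_mul {a b : ℕ} (h : a.Coprime b) (hab : IsSquare (a * b)) :
    IsSquare a := by
  obtain ⟨c, hc⟩ := hab
  obtain ⟨d, rfl⟩ := exists_eq_pow_of_mul_eq_pow (Nat.isUnit_iff.2 h) (hc.trans (sq c).symm)
  exact ⟨d, sq d⟩

theorem eq_zero_of_isSquare_mul_mul_sq_add_sq {p q : ℕ} (hpq : p.Coprime q) (hq : q ≠ 0)
    (h : IsSquare (q * (p * (p ^ 2 + q ^ 2)))) : p = 0 := by
  have hp_cop : p.Coprime (p ^ 2 + q ^ 2) := by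
    simpa [add_comm, sq p] using (Nat.coprime_add_mul_right_right p (q ^ 2) p).2 (hpq.pow_right 2)
  have hq_cop : q.Coprime (p * (p ^ 2 + q ^ 2)) := by
    refine Nat.Coprime.mul_right hpq.symm ?_
    simpa [sq q] using (Nat.coprime_add_mul_right_right q (p ^ 2) q).2 (hpq.symm.pow_right 2)
  have h' : IsSquare (p * (p ^ 2 + q ^ 2)) :=
    hq_cop.symm.isSquare_of_isSquare_mul (by rwa [mul_comm])
  obtain ⟨k, rfl⟩ := hq_cop.isSquare_of_isSquare_mul h
  obtain ⟨m, rfl⟩ := hp_cop.isSquare_of_isSquare_mul h'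
  obtain ⟨n, hn⟩ := hp_cop.symm.isSquare_of_isSquare_mul (by rwa [mul_comm] at h')
  by_contra hm
  refine not_fermat_42 (a := m) (b := k) (c := n) (by simpa using hm) (by simpa using hq) ?_
  exact_mod_cast (by rw [sq n, ← hn]; ring : m ^ 4 + k ^ 4 = n ^ 2)

theorem Rat.eq_zero_of_isSquare_pow_three_add_self {x : ℚ} (h : IsSquare (x ^ 3 + x)) : x = 0 := by
  have hx : 0 ≤ x := by
    have := h.nonneg
    nlinarith [sq_nonneg x]
  set p := x.num.natAbs
  set q := x.den
  have hxpq : x = p / q := by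
    rw [Nat.cast_natAbs, Int.cast_abs, abs_of_nonneg (by exact_mod_cast Rat.num_nonneg.2 hx),
      Rat.num_div_den]
  suffices p = 0 by simpa [p] using this
  refine eq_zero_of_isSquare_mul_mul_sq_add_sq x.reduced x.den_nz (Rat.isSquare_natCast_iff.mp ?_)
  obtain ⟨r, hr⟩ := h
  refine ⟨r * q ^ 2, ?_⟩
  have hq : (q : ℚ) ≠ 0 := by exact_mod_cast x.den_nz
  rw [hxpq] at hr
  field_simp at hr
  push_cast
  linear_combination (q : ℚ) * hr

theorem E_x_cubed_plus_x_rational_points (x y : ℚ) :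
    y ^ 2 = x ^ 3 + x → x = 0 ∧ y = 0 := by
  intro h
  obtain rfl : x = 0 := Rat.eq_zero_of_isSquare_pow_three_add_self ⟨y, by rw [← h, sq]⟩
  simpa using h
end

section
/- The only rational points on the elliptic curve E: y² = x³ + 2x (i.e., y² = x(x² + 2)) are (0, 0) and the point at infinity. -/
/-!
Write x = n/d in lowest terms. Then (y d²)² = d · n(n² + 2d²) is an integer square with coprime
factors d and n(n² + 2d²), so d = e² and n(n² + 2e⁴) = p². Splitting this once more into coprime
squares (after removing a factor 2 when n is even) gives t² = a⁴ + 2b⁴ with a odd, a and b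
coprime, and b = 0 only if n = 0.

That quartic has no solution with b ≠ 0, by Fermat descent through the 2-isogenous quartic
u² = g⁴ − 8f⁴. Modulo 8, b = 2w is even; factoring t² − a⁴ = 32w⁴ into coprime parts gives
a² = g⁴ − 8f⁴ with w = ±gf, and factoring g⁴ − a² = 8f⁴ gives g² = a'⁴ + 2b'⁴ with f = ±a'b',
so b' divides w = b/2.
-/

namespace Int

theorem eq_pow_of_mul_eq_pow_of_nonneg {a b c : ℤ} (hab : IsCoprime a b) (ha : 0 ≤ a)
    {k : ℕ} (h : a * b = c ^ k) : ∃ d, a = d ^ k := by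
  obtain ⟨d, hd⟩ := exists_associated_pow_of_mul_eq_pow' hab h
  refine ⟨|d|, ?_⟩
  rw [Int.associated_iff_natAbs, Int.natAbs_pow] at hd
  rw [← abs_of_nonneg ha, Int.abs_eq_natAbs, ← hd, Nat.cast_pow, Int.natCast_natAbs]

theorem exists_pow_of_mul_eq_mul_pow {P Q c w : ℤ} {k : ℕ} (hPQ : IsCoprime P Q)
    (hPc : IsCoprime P c) (hc : 0 < c) (hP : 0 ≤ P) (hQ : 0 ≤ Q) (h : P * Q = c * w ^ k) :
    ∃ a b, P = a ^ k ∧ Q = c * b ^ k := by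
  obtain ⟨Q, rfl⟩ : c ∣ Q := hPc.symm.dvd_of_dvd_mul_left ⟨w ^ k, h⟩
  have h' : P * Q = w ^ k := mul_left_cancel₀ hc.ne' (by linear_combination h)
  have hPQ' : IsCoprime P Q := hPQ.of_mul_right_right
  obtain ⟨a, rfl⟩ := eq_pow_of_mul_eq_pow_of_nonneg hPQ' hP h'
  obtain ⟨b, rfl⟩ := eq_pow_of_mul_eq_pow_of_nonneg hPQ'.symm
    (nonneg_of_mul_nonneg_right hQ hc) (by rw [mul_comm, h'])
  exact ⟨a, b, rfl, rfl⟩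

theorem exists_pow_of_mul_eq_two_pow_mul_pow {P Q w : ℤ} {n k : ℕ} (hn : n ≠ 0)
    (hPQ : IsCoprime P Q) (hP : 0 ≤ P) (hQ : 0 ≤ Q) (hodd : Odd (P + Q))
    (h : P * Q = 2 ^ k * w ^ n) :
    ∃ a b, Odd a ∧ IsCoprime a b ∧
      (P = a ^ n ∧ Q = 2 ^ k * b ^ n ∨ P = 2 ^ k * b ^ n ∧ Q = a ^ n) := by
  wlog hPodd : Odd P generalizing P Q
  · have hQodd : Odd Q := by
      simpa using hodd.sub_even (Int.not_odd_iff_even.mp hPodd)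
    obtain ⟨a, b, ha, hab, hcases⟩ := this hPQ.symm hQ hP (by rwa [add_comm])
      (by rwa [mul_comm]) hQodd
    exact ⟨a, b, ha, hab, hcases.symm.imp And.symm And.symm⟩
  obtain ⟨a, b, rfl, rfl⟩ := exists_pow_of_mul_eq_mul_pow hPQ
    (Int.isCoprime_two_right.mpr hPodd).pow_right (by positivity) hP hQ h
  refine ⟨a, b, (Int.odd_pow.mp hPodd).resolve_right hn, ?_, Or.inl ⟨rfl, rfl⟩⟩
  exact (IsCoprime.pow_iff (Nat.pos_of_ne_zero hn) (Nat.pos_of_ne_zero hn)).mp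
    hPQ.of_mul_right_right

theorem sq_ne_pow_four_add_two_mul_pow_four {t u v : ℤ} (hu : Odd u) (hv : Odd v) :
    t ^ 2 ≠ u ^ 4 + 2 * v ^ 4 := by
  obtain ⟨k, rfl⟩ := hu
  obtain ⟨l, rfl⟩ := hv
  have key : ∀ t k l : ZMod 8, t ^ 2 ≠ (2 * k + 1) ^ 4 + 2 * (2 * l + 1) ^ 4 := by decide
  exact fun h ↦ key t k l (by exact_mod_cast congrArg (Int.cast : ℤ → ZMod 8) h)

theorem sq_add_pow_four_ne_eight_mul_pow_four {u v w : ℤ} (hu : Odd u) (hv : Odd v) :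
    u ^ 2 + v ^ 4 ≠ 8 * w ^ 4 := by
  obtain ⟨k, rfl⟩ := hu
  obtain ⟨l, rfl⟩ := hv
  have key : ∀ k l w : ZMod 8, (2 * k + 1) ^ 2 + (2 * l + 1) ^ 4 ≠ 8 * w ^ 4 := by decide
  exact fun h ↦ key k l w (by exact_mod_cast congrArg (Int.cast : ℤ → ZMod 8) h)

theorem exists_sq_eq_pow_four_sub_eight_mul_pow_four {u w z : ℤ} (hu : Odd u)
    (huw : IsCoprime u w) (h : z ^ 2 = u ^ 4 + 32 * w ^ 4) :
    ∃ g f, Odd g ∧ IsCoprime u g ∧ u ^ 2 = g ^ 4 - 8 * f ^ 4 ∧ w ^ 4 = (g * f) ^ 4 := by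
  wlog hz : 0 ≤ z generalizing z
  · exact this (z := -z) (by rw [neg_sq, h]) (by linarith)
  have hzodd : Odd z := by
    have : Odd (z ^ 2) := h ▸ hu.pow.add_even ⟨16 * w ^ 4, by ring⟩
    exact (Int.odd_pow.mp this).resolve_right two_ne_zero
  obtain ⟨P, hP⟩ : Even (z - u ^ 2) := hzodd.sub_odd hu.pow
  have hPQ : P * (P + u ^ 2) = 2 ^ 3 * w ^ 4 :=
    mul_left_cancel₀ four_ne_zero (by linear_combination h - (z + 2 * P + u ^ 2) * hP)
  have hcop : IsCoprime (u ^ 2) (2 ^ 3 * w ^ 4) :=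
    ((Int.isCoprime_two_right.mpr hu).pow_right.mul_right huw.pow_right).pow_left
  have hPu : IsCoprime P (u ^ 2) := hcop.symm.of_isCoprime_of_dvd_left ⟨_, hPQ.symm⟩
  have hz' : z = P + (P + u ^ 2) := by linarith
  have hP0 : 0 ≤ P := by nlinarith [sq_nonneg u, sq_nonneg (w ^ 2)]
  obtain ⟨a, b, ha, -, hab⟩ := exists_pow_of_mul_eq_two_pow_mul_pow four_ne_zero
    (by simpa using hPu.mul_add_left_right 1) hP0 (by positivity)
    (hz' ▸ hzodd) hPQ
  rcases hab with ⟨hPa, hQb⟩ | ⟨hPb, hQa⟩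
  · exact (sq_add_pow_four_ne_eight_mul_pow_four hu ha (w := b)
      (by linear_combination hQb - hPa)).elim
  refine ⟨a, b, ha, ?_, by linear_combination hQa - hPb, ?_⟩
  · have : IsCoprime (u ^ 2) (a ^ 4) :=
      hcop.of_isCoprime_of_dvd_right ⟨P, by rw [← hPQ, hQa]; ring⟩
    exact (IsCoprime.pow_iff two_pos four_pos).mp this
  · exact mul_left_cancel₀ (by norm_num : (2 : ℤ) ^ 3 ≠ 0)
      (by rw [← hPQ, hQa, hPb]; ring)

theorem exists_sq_eq_pow_four_add_two_mul_pow_four {u g f : ℤ} (hg : Odd g)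
    (hug : IsCoprime u g) (h : u ^ 2 = g ^ 4 - 8 * f ^ 4) :
    ∃ a b, Odd a ∧ IsCoprime a b ∧ g ^ 2 = a ^ 4 + 2 * b ^ 4 ∧ f ^ 4 = (a * b) ^ 4 := by
  have hu : Odd u := by
    have : Odd (u ^ 2) := h ▸ hg.pow.sub_even ⟨4 * f ^ 4, by ring⟩
    exact (Int.odd_pow.mp this).resolve_right two_ne_zero
  obtain ⟨R, hR⟩ : Even (g ^ 2 - u) := hg.pow.sub_odd hu
  have hg2 : g ^ 2 = R + (R + u) := by linarith
  have hRS : R * (R + u) = 2 ^ 1 * f ^ 4 :=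
    mul_left_cancel₀ four_ne_zero (by linear_combination -h - (g ^ 2 + 2 * R + u) * hg2)
  have hRu : IsCoprime R u := by
    have : IsCoprime u (R * 2 + u * 1) := by
      convert hug.pow_right (n := 2) using 1
      linarith
    exact (this.of_add_mul_left_right).of_mul_right_left.symm
  have hR0 : 0 ≤ R := by nlinarith [sq_nonneg g, sq_nonneg (f ^ 2)]
  have hS0 : 0 ≤ R + u := by nlinarith [sq_nonneg g, sq_nonneg (f ^ 2)]
  obtain ⟨a, b, ha, hab, hRS'⟩ := exists_pow_of_mul_eq_two_pow_mul_pow four_ne_zero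
    (by simpa using hRu.mul_add_left_right 1) hR0 hS0 (hg2 ▸ hg.pow) hRS
  have hsum : R + (R + u) = a ^ 4 + 2 * b ^ 4 ∧ R * (R + u) = 2 * (a * b) ^ 4 := by
    rcases hRS' with ⟨hR', hS'⟩ | ⟨hR', hS'⟩ <;> rw [hS', hR'] <;> constructor <;> ring
  refine ⟨a, b, ha, hab, hg2.trans hsum.1, ?_⟩
  exact mul_left_cancel₀ two_ne_zero (by rw [← hsum.2, hRS]; ring)

theorem exists_smaller_sq_eq_pow_four_add_two_mul_pow_four {u v z : ℤ} (hu : Odd u)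
    (huv : IsCoprime u v) (hv : v ≠ 0) (h : z ^ 2 = u ^ 4 + 2 * v ^ 4) :
    ∃ a b c : ℤ, Odd a ∧ IsCoprime a b ∧ b ≠ 0 ∧ c ^ 2 = a ^ 4 + 2 * b ^ 4 ∧
      b.natAbs < v.natAbs := by
  obtain ⟨w, rfl⟩ : Even v := by
    by_contra hv'
    exact sq_ne_pow_four_add_two_mul_pow_four hu (Int.not_even_iff_odd.mp hv') h
  obtain ⟨g, f, hg, hug, hgf, hw⟩ := exists_sq_eq_pow_four_sub_eight_mul_pow_four (z := z) hu
    (huv.of_isCoprime_of_dvd_right ⟨2, by ring⟩) (by linear_combination h)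
  obtain ⟨a, b, ha, hab, habg, hf⟩ := exists_sq_eq_pow_four_add_two_mul_pow_four hg hug hgf
  have hw' : w ^ 4 = (g * a * b) ^ 4 := by rw [hw, mul_pow, hf]; ring
  have hw0 : w ≠ 0 := by rintro rfl; simp at hv
  have hbw : b ∣ w := (Int.pow_dvd_pow_iff four_ne_zero).mp ⟨(g * a) ^ 4, by rw [hw']; ring⟩
  refine ⟨a, b, g, ha, hab, ?_, habg, ?_⟩
  · rintro rfl
    exact hw0 (pow_eq_zero_iff four_ne_zero |>.mp (by simpa using hw'))
  · have := Int.natAbs_le_of_dvd_ne_zero hbw hw0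
    omega

theorem eq_zero_of_sq_eq_pow_four_add_two_mul_pow_four {u v z : ℤ} (hu : Odd u)
    (huv : IsCoprime u v) (h : z ^ 2 = u ^ 4 + 2 * v ^ 4) : v = 0 := by
  induction hn : v.natAbs using Nat.strong_induction_on generalizing u v z with
  | _ n ih =>
    by_contra hv
    obtain ⟨a, b, c, ha, hab, hb, h', hlt⟩ :=
      exists_smaller_sq_eq_pow_four_add_two_mul_pow_four hu huv hv h
    exact hb (ih b.natAbs (hn ▸ hlt) ha hab h' rfl)

theorem eq_zero_of_sq_eq_mul_sq_add_two_mul_pow_four {n e p : ℤ} (he : e ≠ 0)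
    (hne : IsCoprime n e) (h : p ^ 2 = n * (n ^ 2 + 2 * e ^ 4)) : n = 0 := by
  have hn : 0 ≤ n := by
    by_contra! hn
    have : n * (n ^ 2 + 2 * e ^ 4) < 0 := mul_neg_of_neg_of_pos hn (by positivity)
    nlinarith [sq_nonneg p]
  rcases Int.even_or_odd n with ⟨m, rfl⟩ | hodd
  · have hme : IsCoprime m e := hne.of_isCoprime_of_dvd_left ⟨2, by ring⟩
    have he_odd : Odd e := Int.isCoprime_two_left.mp (hne.of_isCoprime_of_dvd_left ⟨m, by ring⟩)
    obtain ⟨q, rfl⟩ : Even p := by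
      refine (Int.even_pow' two_ne_zero).mp ⟨m * (4 * m ^ 2 + 2 * e ^ 4), ?_⟩
      rw [h]; ring
    have hq : m * (2 * m ^ 2 + e ^ 4) = q ^ 2 :=
      mul_left_cancel₀ four_ne_zero (by linear_combination -h)
    have hcop : IsCoprime m (2 * m ^ 2 + e ^ 4) := by
      have h' := (hme.pow_right (n := 4)).mul_add_left_right (2 * m)
      rwa [show m * (2 * m) + e ^ 4 = 2 * m ^ 2 + e ^ 4 by ring] at h'
    obtain ⟨s, rfl⟩ := eq_pow_of_mul_eq_pow_of_nonneg hcop (by linarith) hq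
    obtain ⟨t, ht⟩ := eq_pow_of_mul_eq_pow_of_nonneg hcop.symm (by positivity)
      (by rw [mul_comm, hq])
    have hs : s = 0 := eq_zero_of_sq_eq_pow_four_add_two_mul_pow_four (z := t) he_odd
      ((IsCoprime.pow_left_iff two_pos).mp hme).symm (by linear_combination -ht)
    simp [hs]
  · have hcop : IsCoprime n (n ^ 2 + 2 * e ^ 4) := by
      have h' := ((Int.isCoprime_two_right.mpr hodd).mul_right
        (hne.pow_right (n := 4))).mul_add_left_right n
      rwa [show n * n + 2 * e ^ 4 = n ^ 2 + 2 * e ^ 4 by ring] at h'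
    obtain ⟨s, rfl⟩ := eq_pow_of_mul_eq_pow_of_nonneg hcop hn h.symm
    obtain ⟨t, ht⟩ := eq_pow_of_mul_eq_pow_of_nonneg hcop.symm (by positivity)
      (by rw [mul_comm, h])
    have hs : Odd s := (Int.odd_pow.mp hodd).resolve_right two_ne_zero
    exact absurd (eq_zero_of_sq_eq_pow_four_add_two_mul_pow_four (z := t) hs
      ((IsCoprime.pow_left_iff two_pos).mp hne) (by linear_combination -ht)) he

theorem eq_zero_of_isSquare_mul_mul_sq_add_two_mul_sq {n d : ℤ} (hd : 0 < d)
    (hnd : IsCoprime n d) (h : IsSquare (d * (n * (n ^ 2 + 2 * d ^ 2)))) : n = 0 := by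
  obtain ⟨t, ht⟩ := h
  rw [← sq] at ht
  have hcop : IsCoprime d (n * (n ^ 2 + 2 * d ^ 2)) := by
    have h' := (hnd.symm.mul_right hnd.symm).mul_add_left_right (2 * d)
    rw [show d * (2 * d) + n * n = n ^ 2 + 2 * d ^ 2 by ring] at h'
    exact hnd.symm.mul_right h'
  obtain ⟨e, rfl⟩ := eq_pow_of_mul_eq_pow_of_nonneg hcop hd.le ht
  obtain ⟨p, hp⟩ := eq_pow_of_mul_eq_pow_of_nonneg hcop.symm
    (nonneg_of_mul_nonneg_right (ht ▸ sq_nonneg t) hd) (by rw [mul_comm, ht])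
  exact eq_zero_of_sq_eq_mul_sq_add_two_mul_pow_four (p := p) (by rintro rfl; simp at hd)
    ((IsCoprime.pow_right_iff two_pos).mp hnd) (by rw [← hp]; ring)

end Int

theorem E_x_cubed_plus_two_x_rational_points (x y : ℚ) :
    y ^ 2 = x ^ 3 + 2 * x → x = 0 ∧ y = 0 := by
  intro h
  have hsq : IsSquare ((x.den : ℤ) * (x.num * (x.num ^ 2 + 2 * (x.den : ℤ) ^ 2))) := by
    rw [← Rat.isSquare_intCast_iff]
    refine ⟨y * x.den ^ 2, ?_⟩
    push_cast
    rw [← Rat.mul_den_eq_num]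
    linear_combination (-(x.den : ℚ) ^ 4) * h
  have hx : x = 0 := Rat.num_eq_zero.mp
    (Int.eq_zero_of_isSquare_mul_mul_sq_add_two_mul_sq (by exact_mod_cast x.pos)
      x.isCoprime_num_den hsq)
  subst hx
  exact ⟨rfl, by simpa using h⟩
end

section
/- The only rational points on the elliptic curve E: y² = x³ + 4x (i.e., y² = x(x² + 4)) are (0, 0), (2, 4), (2, -4), and the point at infinity. -/
/-!
Write `x = a / c²` in lowest terms; the curve equation becomes `b² = a (a² + 4c⁴)` with
`a ≥ 0` and `gcd (a, c) = 1`, and `gcd (a, a² + 4c⁴)` divides `4`. Splitting by the power of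
`2` in `a`, both factors are (up to a power of `2`) squares, which leads either to
`s⁴ + 4c⁴ = t²` with `s` odd, which has no solution, or to `s⁴ + c⁴ = 2t²`, which forces
`s = c`, i.e. `x = 2`. Both facts reduce to Fermat's theorem that `x⁴ = y⁴ + z²` has no
solution in positive integers, proved by infinite descent through the parametrisation of
primitive Pythagorean triples.
-/

theorem Nat.Coprime.exists_pow_eq_of_mul_eq_pow {a b c k : ℕ} (hab : a.Coprime b)
    (h : a * b = c ^ k) : ∃ d e, a = d ^ k ∧ b = e ^ k := by
  obtain ⟨d, hd⟩ := exists_eq_pow_of_mul_eq_pow (Nat.isUnit_iff.2 hab) h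
  obtain ⟨e, he⟩ := exists_eq_pow_of_mul_eq_pow (Nat.isUnit_iff.2 hab.symm) (mul_comm a b ▸ h)
  exact ⟨d, e, hd, he⟩

theorem Nat.exists_sq_eq_of_sq_mul_eq_sq {d n b : ℕ} (hd : 0 < d) (h : d ^ 2 * n = b ^ 2) :
    ∃ w, n = w ^ 2 := by
  obtain ⟨w, rfl⟩ := (Nat.pow_dvd_pow_iff two_ne_zero).1 ⟨n, h.symm⟩
  exact ⟨w, Nat.eq_of_mul_eq_mul_left (pow_pos hd 2) (by rw [h]; ring)⟩

theorem Nat.exists_of_coprime_of_sq_add_sq_eq_sq {a b c : ℕ} (hab : a.Coprime b) (ha : Odd a)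
    (hb : 0 < b) (h : a ^ 2 + b ^ 2 = c ^ 2) :
    ∃ m n : ℕ, m.Coprime n ∧ (Even m ∨ Even n) ∧
      a + n ^ 2 = m ^ 2 ∧ b = 2 * m * n ∧ c = m ^ 2 + n ^ 2 := by
  have htriple : PythagoreanTriple (a : ℤ) b c := by
    unfold PythagoreanTriple
    exact_mod_cast (by linear_combination h : a * a + b * b = c * c)
  have hc : 0 < c := Nat.pos_of_ne_zero (by rintro rfl; simp at h; omega)
  obtain ⟨m, n, ha', hb', hc', hmn, hpar, hm⟩ := htriple.coprime_classification'
    (Int.gcd_natCast_natCast a b ▸ hab) (by exact_mod_cast Nat.odd_iff.1 ha) (by omega)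
  lift m to ℕ using hm
  have hn : 0 < n := by
    by_contra! hn
    have : (b : ℤ) ≤ 0 := hb' ▸ mul_nonpos_of_nonneg_of_nonpos (by positivity) hn
    omega
  lift n to ℕ using hn.le
  refine ⟨m, n, by rwa [Int.gcd_natCast_natCast] at hmn, ?_, ?_, by exact_mod_cast hb',
    by exact_mod_cast hc'⟩
  · rcases hpar with ⟨hm2, -⟩ | ⟨-, hn2⟩
    · exact Or.inl (Nat.even_iff.2 (by omega))
    · exact Or.inr (Nat.even_iff.2 (by omega))
  · have : (a : ℤ) + n ^ 2 = m ^ 2 := by rw [ha']; ring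
    exact_mod_cast this

theorem Nat.exists_eq_two_mul_sq_of_sq_eq_two_mul_mul {y m n : ℕ} (hmn : m.Coprime n)
    (hm : Even m) (h : y ^ 2 = 2 * m * n) : ∃ u v, m = 2 * u ^ 2 ∧ n = v ^ 2 := by
  obtain ⟨k, rfl⟩ := hm
  obtain ⟨w, hw⟩ := Nat.exists_sq_eq_of_sq_mul_eq_sq (d := 2) (n := k * n) two_pos
    (by rw [h]; ring)
  have hkn : k.Coprime n := hmn.coprime_dvd_left (Dvd.intro_left 2 (two_mul k))
  obtain ⟨u, v, rfl, rfl⟩ := hkn.exists_pow_eq_of_mul_eq_pow hw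
  exact ⟨u, v, by ring, rfl⟩

/-- Fermat's right triangle theorem (no right triangle with integer sides has square area) is
equivalent to the nonexistence of such triples. -/
def FermatRightTriangle (x y z : ℕ) : Prop := 0 < y ∧ 0 < z ∧ x ^ 4 = y ^ 4 + z ^ 2

/-- With `t = s² + 2d`, the equation reads `d (d + s²) = c⁴`, a product of coprime factors,
so `d = p⁴` and `d + s² = q⁴`. -/
theorem exists_fermatRightTriangle_of_fourth_add_four_mul_fourth_eq_sq {s c t : ℕ} (hs : Odd s)
    (hsc : s.Coprime c) (hc : 0 < c) (h : s ^ 4 + 4 * c ^ 4 = t ^ 2) :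
    ∃ q p, q < t ∧ FermatRightTriangle q p s := by
  have ht : Odd t := by
    have : Odd (t ^ 2) := h ▸ hs.pow.add_even ⟨2 * c ^ 4, by ring⟩
    exact (Nat.odd_pow_iff two_ne_zero).1 this
  have hst : s ^ 2 < t := by
    have : (s ^ 2) ^ 2 < t ^ 2 := by rw [← h]; nlinarith [pow_pos hc 4]
    exact lt_of_pow_lt_pow_left₀ 2 (Nat.zero_le t) this
  obtain ⟨d, rfl⟩ : ∃ d, t = s ^ 2 + 2 * d := by
    obtain ⟨d, hd⟩ := Nat.Odd.sub_odd ht (hs.pow (n := 2))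
    exact ⟨d, by omega⟩
  have hdc : d * (d + s ^ 2) = c ^ 4 := by
    have : 4 * (d * (d + s ^ 2)) = 4 * c ^ 4 := by linear_combination h.symm
    omega
  have hcop : d.Coprime (d + s ^ 2) := Nat.coprime_self_add_right.2
    ((hsc.symm.pow 4 2).coprime_dvd_left (Dvd.intro _ hdc))
  obtain ⟨p, q, rfl, hq⟩ := hcop.exists_pow_eq_of_mul_eq_pow hdc
  have hp : 0 < p := Nat.pos_of_ne_zero (by rintro rfl; simp at hdc; omega)
  refine ⟨q, p, ?_, hp, hs.pos, by rw [← hq]⟩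
  calc q ≤ q ^ 4 := Nat.le_self_pow (by norm_num) q
    _ < s ^ 2 + 2 * p ^ 4 := by rw [← hq]; have := pow_pos hp 4; omega

namespace FermatRightTriangle

variable {x y z : ℕ}

theorem exists_lt_of_not_coprime (h : FermatRightTriangle x y z) (hxy : ¬x.Coprime y) :
    ∃ x' < x, ∃ y' z', FermatRightTriangle x' y' z' := by
  obtain ⟨hy, hz, h⟩ := h
  obtain ⟨p, hp, ⟨x', rfl⟩, ⟨y', rfl⟩⟩ := Nat.Prime.not_coprime_iff_dvd.1 hxy
  have hx' : 0 < x' := by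
    have : 0 < (p * x') ^ 4 := by rw [h]; positivity
    exact Nat.pos_of_ne_zero (by rintro rfl; simp at this)
  obtain ⟨z', rfl⟩ : p ^ 2 ∣ z := by
    have : (p ^ 2) ^ 2 ∣ (p * y') ^ 4 + z ^ 2 := h ▸ ⟨x' ^ 4, by ring⟩
    exact (Nat.pow_dvd_pow_iff two_ne_zero).1 ((Nat.dvd_add_right ⟨y' ^ 4, by ring⟩).1 this)
  refine ⟨x', lt_mul_left hx' hp.one_lt, y', z', pos_of_mul_pos_right hy (Nat.zero_le _),
    pos_of_mul_pos_right hz (Nat.zero_le _), ?_⟩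
  refine Nat.eq_of_mul_eq_mul_left (pow_pos hp.pos 4) ?_
  linear_combination h

theorem exists_lt_of_coprime (h : FermatRightTriangle x y z) (hxy : x.Coprime y) :
    ∃ x' < x, ∃ y' z', FermatRightTriangle x' y' z' := by
  obtain ⟨hy, hz, h⟩ := h
  have hyz : (y ^ 2).Coprime z := by
    have : ((y ^ 2) ^ 2).Coprime (z ^ 2) := by
      rw [← pow_mul]
      exact Nat.coprime_self_add_right.1 (h ▸ hxy.symm.pow 4 4)
    simpa [Nat.coprime_pow_left_iff, Nat.coprime_pow_right_iff] using this
  have hx : 0 < x := by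
    have : 0 < x ^ 4 := by rw [h]; positivity
    exact Nat.pos_of_ne_zero (by rintro rfl; simp at this)
  rcases Nat.even_or_odd y with hy2 | hy2
  · -- `(z, y², x²)` is primitive with `y² = 2mn`, which turns `x² = m² + n²` into `v⁴ + 4u⁴`.
    have hz2 : Odd z := Nat.Coprime.odd_of_left
      (hyz.coprime_dvd_left (dvd_pow (even_iff_two_dvd.1 hy2) two_ne_zero))
    obtain ⟨m, n, hmn, hpar, -, hyn, hxn⟩ := Nat.exists_of_coprime_of_sq_add_sq_eq_sq
      (c := x ^ 2) hyz.symm hz2 (by positivity) (by linear_combination h.symm)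
    wlog hm : Even m generalizing m n
    · exact this n m hmn.symm hpar.symm (by rw [hyn]; ring) (by rw [hxn]; ring)
        (hpar.resolve_left hm)
    obtain ⟨u, v, rfl, rfl⟩ := Nat.exists_eq_two_mul_sq_of_sq_eq_two_mul_mul hmn hm hyn
    have hu : 0 < u := Nat.pos_of_ne_zero (by rintro rfl; simp at hyn; omega)
    have hv : Odd v := (Nat.odd_pow_iff two_ne_zero).1
      (Nat.Coprime.odd_of_left (hmn.coprime_dvd_left (dvd_mul_right 2 _)))
    have hvu : v.Coprime u := by
      simpa [Nat.coprime_pow_left_iff, Nat.coprime_pow_right_iff] using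
        hmn.coprime_mul_left.symm
    obtain ⟨q, p, hq, hqp⟩ := exists_fermatRightTriangle_of_fourth_add_four_mul_fourth_eq_sq
      hv hvu hu (by rw [hxn]; ring)
    exact ⟨q, hq, p, v, hqp⟩
  · -- `(y², z, x²)` is primitive and `m⁴ - n⁴ = (m² - n²) (m² + n²) = (x y)²`.
    obtain ⟨m, n, -, -, hym, hzn, hxn⟩ := Nat.exists_of_coprime_of_sq_add_sq_eq_sq
      (c := x ^ 2) hyz hy2.pow hz (by linear_combination h.symm)
    have hn : 0 < n := Nat.pos_of_ne_zero (by rintro rfl; simp at hzn; omega)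
    refine ⟨m, ?_, n, x * y, hn, by positivity, ?_⟩
    · have : m ^ 2 < x ^ 2 := by rw [hxn]; have := pow_pos hn 2; omega
      exact lt_of_pow_lt_pow_left₀ 2 (Nat.zero_le x) this
    · rw [mul_pow, hxn, show m ^ 4 = (m ^ 2) ^ 2 by ring, ← hym]
      ring

theorem exists_lt (h : FermatRightTriangle x y z) :
    ∃ x' < x, ∃ y' z', FermatRightTriangle x' y' z' := by
  by_cases hxy : x.Coprime y
  · exact h.exists_lt_of_coprime hxy
  · exact h.exists_lt_of_not_coprime hxy

end FermatRightTriangle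

theorem not_fermatRightTriangle {x y z : ℕ} : ¬FermatRightTriangle x y z := by
  induction x using Nat.strong_induction_on generalizing y z with
  | _ x ih =>
    intro h
    obtain ⟨x', hx', y', z', h'⟩ := h.exists_lt
    exact ih x' hx' h'

theorem fourth_add_four_mul_fourth_ne_sq {s c t : ℕ} (hs : Odd s) (hsc : s.Coprime c)
    (hc : 0 < c) : s ^ 4 + 4 * c ^ 4 ≠ t ^ 2 := fun h ↦
  let ⟨_, _, _, h'⟩ :=
    exists_fermatRightTriangle_of_fourth_add_four_mul_fourth_eq_sq hs hsc hc h
  not_fermatRightTriangle h'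

/-- For `b < a`, `t⁴ - (a b)⁴ = ((a⁴ - b⁴) / 2)²`. -/
theorem eq_of_fourth_add_fourth_eq_two_mul_sq {a b t : ℕ} (ha : 0 < a) (hb : 0 < b)
    (h : a ^ 4 + b ^ 4 = 2 * t ^ 2) : a = b := by
  wlog hba : b ≤ a generalizing a b
  · exact (this hb ha (by rw [← h]; ring) (by omega)).symm
  by_contra hne
  have hlt : b ^ 4 < a ^ 4 := Nat.pow_lt_pow_left (by omega) (by norm_num)
  obtain ⟨D, hD⟩ : ∃ D, t ^ 2 = b ^ 4 + D := ⟨t ^ 2 - b ^ 4, by omega⟩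
  refine not_fermatRightTriangle (x := t) (y := a * b) (z := D) ⟨by positivity, by omega, ?_⟩
  have ha4 : a ^ 4 = b ^ 4 + 2 * D := by omega
  rw [mul_pow, ha4, show t ^ 4 = (t ^ 2) ^ 2 by ring, hD]
  ring

theorem num_sq_eq_and_den_sq_eq_of_sq_eq_cube_add_four_mul {x y : ℚ}
    (h : y ^ 2 = x ^ 3 + 4 * x) :
    y.num ^ 2 = x.num ^ 3 + 4 * x.num * x.den ^ 2 ∧ y.den ^ 2 = x.den ^ 3 := by
  have hx : x ^ 3 + 4 * x =
      ((x.num ^ 3 + 4 * x.num * x.den ^ 2 : ℤ) : ℚ) / ((x.den ^ 3 : ℕ) : ℤ) := by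
    conv_lhs => rw [← Rat.num_div_den x]
    push_cast
    field_simp
  have hcop : IsCoprime (x.num ^ 3 + 4 * x.num * x.den ^ 2) ((x.den ^ 3 : ℕ) : ℤ) := by
    have := (x.isCoprime_num_den.pow_left (m := 3)).add_mul_right_left (4 * x.num * x.den)
    rw [mul_assoc, ← sq] at this
    exact_mod_cast this.pow_right
  rw [Int.isCoprime_iff_nat_coprime] at hcop
  rw [hx] at h
  constructor
  · rw [← Rat.num_pow, h, Rat.num_div_eq_of_coprime (by positivity) hcop]
  · exact_mod_cast Rat.den_pow y 2 ▸ h ▸ Rat.den_div_eq_of_coprime (by positivity) hcop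

theorem exists_nat_of_sq_eq_cube_add_four_mul {x y : ℚ} (h : y ^ 2 = x ^ 3 + 4 * x) :
    ∃ a b c : ℕ, 0 < c ∧ a.Coprime c ∧ b ^ 2 = a * (a ^ 2 + 4 * c ^ 4) ∧ x = a / c ^ 2 := by
  obtain ⟨hnum, hden⟩ := num_sq_eq_and_den_sq_eq_of_sq_eq_cube_add_four_mul h
  obtain ⟨c, hc⟩ := Nat.exists_sq_eq_of_sq_mul_eq_sq x.den_pos (by rw [hden]; ring)
  have hnum_nonneg : 0 ≤ x.num := by
    refine nonneg_of_mul_nonneg_left (b := x.num ^ 2 + 4 * x.den ^ 2) ?_ (by positivity)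
    nlinarith [sq_nonneg y.num]
  obtain ⟨a, ha⟩ := Int.eq_ofNat_of_zero_le hnum_nonneg
  have hac : a.Coprime (c ^ 2) := by simpa [ha, hc] using x.reduced
  refine ⟨a, y.num.natAbs, c, Nat.pos_of_ne_zero ?_, ?_, ?_, ?_⟩
  · rintro rfl
    simp [hc] at hden
  · simpa [Nat.coprime_pow_right_iff] using hac
  · zify
    rw [sq_abs, hnum, ha, hc]
    push_cast
    ring
  · rw [← Rat.num_div_den x, ha, hc]
    push_cast
    rfl

section IntegralPoints

variable {a b c : ℕ}

theorem sq_ne_mul_of_odd (ha : Odd a) (hac : a.Coprime c) (hc : 0 < c) :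
    b ^ 2 ≠ a * (a ^ 2 + 4 * c ^ 4) := by
  intro h
  have hcop : a.Coprime (a ^ 2 + 4 * c ^ 4) := by
    rw [show a ^ 2 + 4 * c ^ 4 = 4 * c ^ 4 + a * a by ring, Nat.coprime_add_mul_right_right]
    exact Nat.Coprime.mul_right ((Nat.coprime_two_right.2 ha).pow_right 2) (hac.pow_right 4)
  obtain ⟨s, t, rfl, ht⟩ := hcop.exists_pow_eq_of_mul_eq_pow h.symm
  refine fourth_add_four_mul_fourth_ne_sq (t := t) ((Nat.odd_pow_iff two_ne_zero).1 ha)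
    (by simpa [Nat.coprime_pow_left_iff] using hac) hc ?_
  rw [← ht]
  ring

theorem sq_ne_mul_of_four_dvd (ha : 0 < a) (h4 : 4 ∣ a) (hac : a.Coprime c) :
    b ^ 2 ≠ a * (a ^ 2 + 4 * c ^ 4) := by
  intro h
  obtain ⟨k, rfl⟩ := h4
  obtain ⟨w, hw⟩ := Nat.exists_sq_eq_of_sq_mul_eq_sq (d := 4) (n := k * (4 * k ^ 2 + c ^ 4))
    (by norm_num) (by rw [h]; ring)
  have hc : Odd c := Nat.Coprime.odd_of_left (hac.coprime_dvd_left ⟨2 * k, by ring⟩)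
  have hcop : k.Coprime (4 * k ^ 2 + c ^ 4) := by
    rw [show 4 * k ^ 2 + c ^ 4 = c ^ 4 + 4 * k * k by ring, Nat.coprime_add_mul_right_right]
    exact hac.coprime_mul_left.pow_right 4
  obtain ⟨s, t, rfl, ht⟩ := hcop.exists_pow_eq_of_mul_eq_pow hw
  refine fourth_add_four_mul_fourth_ne_sq (c := s) (t := t) hc ?_ (Nat.pos_of_ne_zero ?_) ?_
  · simpa [Nat.coprime_pow_left_iff] using hac.coprime_mul_left.symm
  · rintro rfl
    simp at ha
  · rw [← ht]
    ring

theorem eq_sq_of_sq_eq_two_mul_mul_of_odd {k : ℕ} (hk : Odd k) (hkc : (2 * k).Coprime c)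
    (h : b ^ 2 = 2 * k * ((2 * k) ^ 2 + 4 * c ^ 4)) : k = c ^ 2 := by
  have hc : Odd c := Nat.Coprime.odd_of_left (hkc.coprime_dvd_left ⟨k, rfl⟩)
  obtain ⟨m, hm⟩ : ∃ m, k ^ 2 + c ^ 4 = 2 * m := by
    obtain ⟨m, hm⟩ := (hk.pow (n := 2)).add_odd (hc.pow (n := 4))
    exact ⟨m, by omega⟩
  obtain ⟨w, hw⟩ := Nat.exists_sq_eq_of_sq_mul_eq_sq (d := 4) (n := k * m)
    (by norm_num) (by rw [h]; linear_combination 8 * k * hm.symm)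
  have hcop : k.Coprime m := by
    have : k.Coprime (k ^ 2 + c ^ 4) := by
      rw [show k ^ 2 + c ^ 4 = c ^ 4 + k * k by ring, Nat.coprime_add_mul_right_right]
      exact hkc.coprime_mul_left.pow_right 4
    exact this.coprime_dvd_right ⟨2, by rw [hm]; ring⟩
  obtain ⟨s, t, rfl, rfl⟩ := hcop.exists_pow_eq_of_mul_eq_pow hw
  have hs : Odd s := (Nat.odd_pow_iff two_ne_zero).1 hk
  rw [eq_of_fourth_add_fourth_eq_two_mul_sq hs.pos hc.pos (t := t) (by rw [← hm]; ring)]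

theorem eq_zero_or_eq_two_mul_sq_of_sq_eq_mul (hac : a.Coprime c) (hc : 0 < c)
    (h : b ^ 2 = a * (a ^ 2 + 4 * c ^ 4)) : a = 0 ∨ a = 2 * c ^ 2 := by
  obtain ⟨k, rfl | rfl⟩ := Nat.even_or_odd' a
  · obtain ⟨j, rfl | rfl⟩ := Nat.even_or_odd' k
    · rcases Nat.eq_zero_or_pos j with rfl | hj
      · exact Or.inl rfl
      · exact absurd h (sq_ne_mul_of_four_dvd (by omega) ⟨j, by ring⟩ hac)
    · exact Or.inr (by rw [eq_sq_of_sq_eq_two_mul_mul_of_odd (odd_two_mul_add_one j) hac h])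
  · exact absurd h (sq_ne_mul_of_odd (odd_two_mul_add_one k) hac hc)

end IntegralPoints

theorem E_x_cubed_plus_four_x_rational_points (x y : ℚ) :
    y ^ 2 = x ^ 3 + 4 * x → (x = 0 ∧ y = 0) ∨ (x = 2 ∧ (y = 4 ∨ y = -4)) := by
  intro h
  obtain ⟨a, b, c, hc, hac, hab, rfl⟩ := exists_nat_of_sq_eq_cube_add_four_mul h
  rcases eq_zero_or_eq_two_mul_sq_of_sq_eq_mul hac hc hab with rfl | rfl
  · left
    simpa using h
  · have hx : ((2 * c ^ 2 : ℕ) : ℚ) / (c : ℚ) ^ 2 = 2 := by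
      push_cast
      field_simp
    rw [hx] at h ⊢
    exact Or.inr ⟨rfl, sq_eq_sq_iff_eq_or_eq_neg.1 (by rw [h]; norm_num)⟩
end

section
/- Let p ≡ 5 (mod 8) be a prime number. Then the negative Pell equation x² - p·y² = -4 has a solution in integers; equivalently, if x² - p·y² = 4 has an integer solution with y ≠ 0, then x² - p·y² = -4 has an integer solution. -/
lemma nat_sq_of_coprime {a b c : ℕ} (h : Nat.Coprime a b) (heq : a * b = c ^ 2) :
    ∃ d, a = d ^ 2 :=
  exists_eq_pow_of_mul_eq_pow (Nat.isUnit_iff.mpr h) heq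

lemma descent (p : ℕ) (hp : p.Prime) (h8 : p % 8 = 5) :
    ∀ a b : ℕ, b ≠ 0 → a * a = p * (b * b) + 1 → ∃ s t : ℕ, s * s + 1 = p * (t * t) := by
  intro a
  induction a using Nat.strong_induction_on with
  | _ a ih =>
    intro b hb heq
    have hp5 : 5 ≤ p := by omega
    -- parity: a odd, b even
    have hpar : a % 2 = 1 ∧ b % 2 = 0 := by
      obtain ⟨k, hk⟩ : ∃ k, p = 8 * k + 5 := ⟨p / 8, by omega⟩
      have hmod8 : (a * a) % 8 = (5 * ((b * b) % 8) + 1) % 8 := by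
        rw [heq, hk]
        have : (8 * k + 5) * (b * b) = 8 * (k * (b * b)) + 5 * (b * b) := by ring
        rw [this]
        generalize k * (b * b) = K
        generalize b * b = B
        omega
      have hA : (a * a) % 8 = ((a % 8) * (a % 8)) % 8 := Nat.mul_mod a a 8
      have hB : (b * b) % 8 = ((b % 8) * (b % 8)) % 8 := Nat.mul_mod b b 8
      generalize a * a = A at hmod8 hA
      generalize b * b = B at hmod8 hB
      obtain ⟨r, hrlt, hr⟩ : ∃ r, r < 8 ∧ a % 8 = r := ⟨_, Nat.mod_lt _ (by norm_num), rfl⟩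
      obtain ⟨s, hslt, hs⟩ : ∃ s, s < 8 ∧ b % 8 = s := ⟨_, Nat.mod_lt _ (by norm_num), rfl⟩
      rw [hr] at hA
      rw [hs] at hB
      interval_cases r <;> interval_cases s <;> omega
    obtain ⟨m, rfl⟩ : ∃ m, a = 2 * m + 1 := ⟨a / 2, by omega⟩
    obtain ⟨c, rfl⟩ : ∃ c, b = 2 * c := ⟨b / 2, by omega⟩
    have hc0 : c ≠ 0 := by omega
    have hc1 : 1 ≤ c * c := Nat.mul_pos (Nat.pos_of_ne_zero hc0) (Nat.pos_of_ne_zero hc0)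
    have heqm : m * (m + 1) = p * (c * c) := by nlinarith [heq]
    have hpc : 5 ≤ p * (c * c) := le_trans (by omega) (Nat.mul_le_mul_left p hc1) |>.trans (le_of_eq (by ring))
    have ha5 : 2 ≤ m := by nlinarith [heqm, hpc]
    have hdvd : p ∣ m * (m + 1) := ⟨c * c, heqm⟩
    have hcop : Nat.Coprime m (m + 1) :=
      (Nat.coprime_self_add_left.mpr (Nat.coprime_one_left m)).symm
    rcases (hp.dvd_mul.mp hdvd) with hpm | hpm
    · -- p ∣ m : descent
      obtain ⟨m', rfl⟩ := hpm
      have heq2 : m' * (p * m' + 1) = c * c := by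
        have hpp : 0 < p := by omega
        have h' : p * (m' * (p * m' + 1)) = p * (c * c) := by ring_nf; ring_nf at heqm; linarith
        exact Nat.eq_of_mul_eq_mul_left hpp h'
      have hcop2 : Nat.Coprime m' (p * m' + 1) :=
        (Nat.coprime_mul_right_add_right m' 1 p).mpr (Nat.coprime_one_right m')
      obtain ⟨s, rfl⟩ := nat_sq_of_coprime hcop2 (by rw [heq2]; ring)
      obtain ⟨t, ht⟩ := nat_sq_of_coprime (Nat.Coprime.symm hcop2) (by rw [mul_comm, heq2]; ring)
      have hs0 : s ≠ 0 := by rintro rfl; norm_num at ha5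
      have ht2 : p * (s * s) + 1 = t * t := by rw [← pow_two, ← pow_two]; exact ht
      have ht0 : t ≠ 0 := by rintro rfl; omega
      have htle : t ≤ t * t := Nat.le_mul_of_pos_left t (Nat.pos_of_ne_zero ht0)
      have hss : 1 ≤ s * s := Nat.mul_pos (Nat.pos_of_ne_zero hs0) (Nat.pos_of_ne_zero hs0)
      have hps : 1 ≤ p * (s * s) := Nat.mul_pos (by omega) hss
      have hmm : p * s ^ 2 = p * (s * s) := by ring
      have htlt : t < 2 * (p * s ^ 2) + 1 := by rw [hmm]; omega
      exact ih t htlt s hs0 (by omega)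
    · -- p ∣ m + 1 : done
      obtain ⟨n', hn'⟩ := hpm
      have heq2 : m * n' = c * c := by
        have hpp : 0 < p := by omega
        have h' : p * (m * n') = p * (c * c) := by rw [← heqm, hn']; ring
        exact Nat.eq_of_mul_eq_mul_left hpp h'
      have hcop2 : Nat.Coprime m n' := hcop.coprime_dvd_right ⟨p, by rw [hn']; ring⟩
      obtain ⟨s, hs⟩ := nat_sq_of_coprime hcop2 (by rw [heq2]; ring)
      obtain ⟨t, ht⟩ := nat_sq_of_coprime (Nat.Coprime.symm hcop2) (by rw [mul_comm, heq2]; ring)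
      refine ⟨s, t, ?_⟩
      have h1 : s * s = m := by rw [hs]; ring
      have h2 : p * (t * t) = p * n' := by rw [ht]; ring
      omega

theorem negative_pell_p_four (p : ℕ) (hp : p.Prime) (hmod : p % 8 = 5)
    (h : ∃ x y : ℤ, y ≠ 0 ∧ x ^ 2 - (p : ℤ) * y ^ 2 = 4) :
    ∃ x y : ℤ, x ^ 2 - (p : ℤ) * y ^ 2 = -4 := by
  obtain ⟨x, y, hy, hxy⟩ := h
  have hp5 : (5 : ℤ) ≤ (p : ℤ) := by exact_mod_cast (by omega : 5 ≤ p)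
  -- produce an integer solution to a^2 - p b^2 = 1 with b ≠ 0
  obtain ⟨a, b, hb, hab⟩ : ∃ a b : ℤ, b ≠ 0 ∧ a ^ 2 - (p : ℤ) * b ^ 2 = 1 := by
    rcases Int.even_or_odd y with ⟨k, hk⟩ | ⟨k, hk⟩
    · -- y even ⇒ x even, divide by 2
      have hxe : Even (x ^ 2) := ⟨2 * (p : ℤ) * k ^ 2 + 2, by rw [hk] at hxy; linear_combination hxy⟩
      have : Even x := (Int.even_pow.mp hxe).1
      obtain ⟨j, hj⟩ := this
      refine ⟨j, k, by rintro rfl; simp at hk; exact hy hk, ?_⟩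
      have h4 : 4 * (j ^ 2 - (p : ℤ) * k ^ 2) = 4 := by
        rw [hj, hk] at hxy; linear_combination hxy
      linarith
    · -- y odd ⇒ p*y^2+1 even; use cubing
      obtain ⟨l, hl⟩ : ∃ l : ℤ, (p : ℤ) = 2 * l + 1 := by
        refine ⟨((p : ℤ) - 1) / 2, ?_⟩
        have : (p : ℤ) % 2 = 1 := by
          have : p % 2 = 1 := by omega
          omega
        omega
      obtain ⟨w, hw⟩ : ∃ w : ℤ, (p : ℤ) * y ^ 2 + 1 = 2 * w := by
        refine ⟨(2 * l + 1) * (2 * k * k + 2 * k) + l + 1, ?_⟩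
        rw [hl, hk]; ring
      have hw1 : 1 ≤ w := by nlinarith [sq_nonneg y, hp5, sq_nonneg (y*y)]
      refine ⟨x * w, y * (w + 1), mul_ne_zero hy (by omega), ?_⟩
      have h4 : 4 * ((x * w) ^ 2 - (p : ℤ) * (y * (w + 1)) ^ 2) = 4 := by
        linear_combination 4 * w ^ 2 * hxy - (8 * w + 4) * hw
      linarith
  -- convert to ℕ
  have habn : a.natAbs * a.natAbs = p * (b.natAbs * b.natAbs) + 1 := by
    have : ((a.natAbs : ℤ)) * a.natAbs = (p : ℤ) * ((b.natAbs : ℤ) * b.natAbs) + 1 := by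
      rw [Int.natAbs_mul_self', Int.natAbs_mul_self']
      linear_combination hab
    exact_mod_cast this
  obtain ⟨s, t, hst⟩ := descent p hp hmod a.natAbs b.natAbs
    (fun h0 => hb (Int.natAbs_eq_zero.mp h0)) habn
  refine ⟨2 * (s : ℤ), 2 * (t : ℤ), ?_⟩
  have hst' : (s : ℤ) * s + 1 = (p : ℤ) * (t * t) := by exact_mod_cast hst
  linear_combination 4 * hst'
end
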